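/- Let G = Σ1 × ⋯ × Σr (r ≥ 2) with generators a_i^(k), b_i^(k), and define c_i = a_i^(1)(b_i^(1))^{-1}, f_j^(k) = a_j^(1)(a_j^(k))^{-1}, g_j^(k) = b_j^(1)(b_j^(k))^{-1}. Then for all i, j ∈ {1,2} and k ∈ {2,…,r}, the identity [b_i^(1), b_j^(k)] = [c_i, g_j^(k)] · [c_j^{-1} f_j^(k), c_i] holds in G. -/

import Mathlib

open FreeGroup
open scoped commutatorElement

def surfRels : Set (FreeGroup (Fin 4)) :=
  {⁅FreeGroup.of (0 : Fin 4), FreeGroup.of (1 : Fin 4)⁆ * ⁅FreeGroup.of (2 : Fin 4), FreeGroup.of (3 : Fin 4)⁆}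

/-- The genus-2 surface group. -/
abbrev Surf := PresentedGroup surfRels

def a (i : Fin 2) : Surf := PresentedGroup.of ⟨i.val, by omega⟩
def b (i : Fin 2) : Surf := PresentedGroup.of ⟨i.val + 2, by omega⟩

abbrev M := Multiplicative (ℤ × ℤ)

def φgen : Fin 4 → M :=
  fun n => Multiplicative.ofAdd (if n.val = 0 ∨ n.val = 2 then ((1 : ℤ), (0 : ℤ)) else ((0 : ℤ), (1 : ℤ)))

lemma φrels : ∀ r ∈ surfRels, FreeGroup.lift φgen r = 1 := by
  rintro r hr
  simp only [surfRels, Set.mem_singleton_iff] at hr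
  subst hr
  have h1 : (FreeGroup.lift φgen) (⁅FreeGroup.of (0 : Fin 4), FreeGroup.of (1 : Fin 4)⁆ * ⁅FreeGroup.of (2 : Fin 4), FreeGroup.of (3 : Fin 4)⁆) = ⁅φgen 0, φgen 1⁆ * ⁅φgen 2, φgen 3⁆ := by
    simp [commutatorElement_def]
  rw [h1, commutatorElement_eq_one_iff_mul_comm.mpr (mul_comm _ _),
    commutatorElement_eq_one_iff_mul_comm.mpr (mul_comm _ _), one_mul]

/-- The homomorphism Σ → ℤ² sending aᵢ, bᵢ to the i-th standard basis vector. -/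
def φ1 : Surf →* M := PresentedGroup.toGroup φrels

/-- The direct product of r genus-2 surface groups. -/
abbrev GG (r : ℕ) := ∀ _ : Fin r, Surf

def A (r : ℕ) (i : Fin 2) (k : Fin r) : GG r := Pi.mulSingle k (a i)
def B (r : ℕ) (i : Fin 2) (k : Fin r) : GG r := Pi.mulSingle k (b i)

/-- The homomorphism G = Σ₁ × ⋯ × Σr → ℤ² sending all aᵢ, bᵢ to eᵢ. -/
def Φ (r : ℕ) : GG r →* M := ∏ k : Fin r, φ1.comp (Pi.evalMonoidHom (fun _ => Surf) k)

/-! Both sides are trivial. The left one is a commutator of elements of different factors.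
On the right, `cⱼ⁻¹ fⱼ⁽ᵏ⁾ = bⱼ⁽¹⁾ (aⱼ⁽ᵏ⁾)⁻¹`, and the `k`-th factor components commute with
`cᵢ`, so the right side is `[cᵢ, bⱼ⁽¹⁾]·[bⱼ⁽¹⁾, cᵢ] = 1`. -/

section Commutator

variable {G : Type*} [Group G] {x y z : G}

theorem commutatorElement_mul_inv_right_of_commute (h : Commute x z) :
    ⁅x, y * z⁻¹⁆ = ⁅x, y⁆ := by
  simp [commutatorElement_mul_right_eq_mul_conj, h.inv_right.commutator_eq]

theorem commutatorElement_mul_inv_left_of_commute (h : Commute z x) :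
    ⁅y * z⁻¹, x⁆ = ⁅y, x⁆ := by
  simp [commutatorElement_mul_left_eq_conj_mul, h.inv_left.commutator_eq]

/-- `c`, `a`, `b`, `a'`, `b'` stand for `cᵢ`, `aⱼ⁽¹⁾`, `bⱼ⁽¹⁾`, `aⱼ⁽ᵏ⁾`, `bⱼ⁽ᵏ⁾`. -/
theorem commutatorElement_mul_commutatorElement_eq_one_of_commute {c a b a' b' : G}
    (ha' : Commute c a') (hb' : Commute c b') :
    ⁅c, b * b'⁻¹⁆ * ⁅(a * b⁻¹)⁻¹ * (a * a'⁻¹), c⁆ = 1 := by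
  have hb : (a * b⁻¹)⁻¹ * (a * a'⁻¹) = b * a'⁻¹ := by group
  rw [hb, commutatorElement_mul_inv_right_of_commute hb',
    commutatorElement_mul_inv_left_of_commute ha'.symm, ← commutatorElement_inv, inv_mul_cancel]

end Commutator

/-- In `G = Σ₁ × ⋯ × Σr`, the identity
`[bᵢ⁽¹⁾, bⱼ⁽ᵏ⁾] = [cᵢ, gⱼ⁽ᵏ⁾]·[cⱼ⁻¹ fⱼ⁽ᵏ⁾, cᵢ]` holds. -/
theorem stmt10 (r : ℕ) (hr : 2 ≤ r) (i j : Fin 2) (k : Fin r) (hk : k ≠ ⟨0, by omega⟩) :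
    (letI o : Fin r := ⟨0, by omega⟩
     letI c : Fin 2 → GG r := fun i' => A r i' o * (B r i' o)⁻¹
     letI f : Fin 2 → GG r := fun j' => A r j' o * (A r j' k)⁻¹
     letI g : Fin 2 → GG r := fun j' => B r j' o * (B r j' k)⁻¹
     ⁅B r i o, B r j k⁆ = ⁅c i, g j⁆ * ⁅(c j)⁻¹ * f j, c i⁆) := by
  set o : Fin r := ⟨0, by omega⟩
  have hsep (x y : Surf) : Commute (Pi.mulSingle o x : GG r) (Pi.mulSingle k y) :=
    Pi.mulSingle_commute (f := fun _ : Fin r => Surf) hk.symm x y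
  have hc (y : Surf) : Commute (A r i o * (B r i o)⁻¹) (Pi.mulSingle k y) :=
    (hsep _ _).mul_left (hsep _ _).inv_left
  exact (hsep (b i) (b j)).commutator_eq.trans
    (commutatorElement_mul_commutatorElement_eq_one_of_commute (hc (a j)) (hc (b j))).symm
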